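/- arXiv:1512.07087 — 5 statements merged into one kernel-verified Lean document; each statement's English description precedes it below -/
import Mathlib

section
/- Let w(x) = c₀ + c₁|x| with c₀, c₁ ≥ 0 and let Γ̃(x) = ιx²/2 with ι > 0. Then the concave envelope of w − Γ̃ equals (w − Γ̃)(x₀) on [−x₀, x₀] and equals w − Γ̃ outside [−x₀, x₀], where x₀ := c₁/ι. -/
/-!
In vertex form `w - Γ̃ = K - (ι/2)(|x| - x₀)²` with `K = (w - Γ̃)(x₀)`. Replacing the square by
`max (|x| - x₀) 0 ^ 2` flattens the function to the constant `K` on `[-x₀, x₀]`; the result is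
concave and lies above `w - Γ̃`, so it dominates the envelope. Conversely every concave majorant
is at least `K` at `±x₀`, hence on all of `[-x₀, x₀]`.
-/

/-- `e` is the concave envelope of `h`: the smallest concave function above `h`. -/
def IsConcaveEnvelope (h e : ℝ → ℝ) : Prop :=
  ConcaveOn ℝ Set.univ e ∧ (∀ x, h x ≤ e x) ∧
    ∀ u : ℝ → ℝ, ConcaveOn ℝ Set.univ u → (∀ x, h x ≤ u x) → ∀ x, e x ≤ u x

open Set

lemma convexOn_sq_max_abs_sub_zero (r : ℝ) :
    ConvexOn ℝ univ fun x : ℝ => max (|x| - r) 0 ^ 2 := by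
  have hpos : ConvexOn ℝ univ fun x : ℝ => max (|x| - r) 0 :=
    ((convexOn_univ_norm (E := ℝ)).add_const (-r)).sup (convexOn_const 0 convex_univ)
  exact hpos.pow (fun x _ => le_max_right _ _) 2

lemma concaveOn_sub_mul_sq_max_abs_sub_zero (K r : ℝ) {a : ℝ} (ha : 0 ≤ a) :
    ConcaveOn ℝ univ fun x : ℝ => K - a * max (|x| - r) 0 ^ 2 :=
  (concaveOn_const K convex_univ).sub ((convexOn_sq_max_abs_sub_zero r).smul ha)

theorem IsConcaveEnvelope.eq_sub_mul_sq_max_abs_sub_zero {K a r : ℝ} {e : ℝ → ℝ}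
    (ha : 0 ≤ a) (hr : 0 ≤ r) (he : IsConcaveEnvelope (fun x => K - a * (|x| - r) ^ 2) e)
    (x : ℝ) : e x = K - a * max (|x| - r) 0 ^ 2 := by
  obtain ⟨he_concave, hle, hmin⟩ := he
  refine le_antisymm (hmin _ (concaveOn_sub_mul_sq_max_abs_sub_zero K r ha) (fun y => ?_) x) ?_
  · rcases le_total (|y| - r) 0 with hy | hy
    · rw [max_eq_right hy]
      nlinarith [sq_nonneg (|y| - r)]
    · rw [max_eq_left hy]
  rcases le_total (|x| - r) 0 with hx | hx
  · have hend : ∀ y, |y| = r → K ≤ e y := fun y hy => by simpa [hy] using hle y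
    have hmid := he_concave.min_le_of_mem_Icc (mem_univ (-r)) (mem_univ r)
      (abs_le.mp (sub_nonpos.mp hx))
    rw [max_eq_right hx]
    calc K - a * 0 ^ 2 = K := by ring
      _ ≤ min (e (-r)) (e r) :=
        le_min (hend (-r) (by rw [abs_neg, abs_of_nonneg hr])) (hend r (abs_of_nonneg hr))
      _ ≤ e x := hmid
  · rw [max_eq_left hx]
    exact hle x

lemma add_mul_abs_sub_mul_sq_eq_vertex_form (c₀ c₁ : ℝ) {ι : ℝ} (hι : ι ≠ 0) (x : ℝ) :
    c₀ + c₁ * |x| - ι * x ^ 2 / 2 =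
      (c₀ + c₁ * (c₁ / ι) - ι * (c₁ / ι) ^ 2 / 2) - ι / 2 * (|x| - c₁ / ι) ^ 2 := by
  rw [← sq_abs x]
  field_simp
  ring

theorem stmt_0_general (c₀ c₁ ι : ℝ) (hc₁ : 0 ≤ c₁) (hι : 0 < ι)
    (e : ℝ → ℝ)
    (he : IsConcaveEnvelope (fun x => (c₀ + c₁ * |x|) - ι * x ^ 2 / 2) e) :
    (∀ x, |x| ≤ c₁ / ι →
      e x = (c₀ + c₁ * |c₁ / ι|) - ι * (c₁ / ι) ^ 2 / 2) ∧
    (∀ x, c₁ / ι ≤ |x| →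
      e x = (c₀ + c₁ * |x|) - ι * x ^ 2 / 2) := by
  have hx₀ : 0 ≤ c₁ / ι := div_nonneg hc₁ hι.le
  simp_rw [add_mul_abs_sub_mul_sq_eq_vertex_form c₀ c₁ hι.ne'] at he
  have he_eq := he.eq_sub_mul_sq_max_abs_sub_zero (by positivity) hx₀
  refine ⟨fun x hx => ?_, fun x hx => ?_⟩
  · rw [he_eq, max_eq_right (sub_nonpos.mpr hx), abs_of_nonneg hx₀]
    ring
  · rw [he_eq, max_eq_left (sub_nonneg.mpr hx), add_mul_abs_sub_mul_sq_eq_vertex_form c₀ c₁ hι.ne']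

theorem stmt_0 (c₀ c₁ ι : ℝ) (hc₀ : 0 ≤ c₀) (hc₁ : 0 ≤ c₁) (hι : 0 < ι)
    (e : ℝ → ℝ)
    (he : IsConcaveEnvelope (fun x => (c₀ + c₁ * |x|) - ι * x ^ 2 / 2) e) :
    (∀ x, |x| ≤ c₁ / ι →
      e x = (c₀ + c₁ * |c₁ / ι|) - ι * (c₁ / ι) ^ 2 / 2) ∧
    (∀ x, c₁ / ι ≤ |x| →
      e x = (c₀ + c₁ * |x|) - ι * x ^ 2 / 2) :=
  stmt_0_general c₀ c₁ ι hc₁ hι e he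
end

section
/- Let g : ℝ → ℝ satisfy |g(x)| ≤ c₀ + c₁|x| for all x, and let Γ̃(x) = ιx²/2 with ι > 0. Then the function ĝ := (g − Γ̃)^conc + Γ̃ (where ^conc denotes the concave envelope) satisfies a linear growth bound: there exist constants C₀, C₁ ≥ 0 such that |ĝ(x)| ≤ C₀ + C₁|x| for all x. -/
/-!
The envelope lies above `g - Γ̃ ≥ -(c₀ + c₁|x|) - Γ̃`, which gives the lower bound. For the upper
bound at `x`, the tangent line of `-Γ̃` at `x`, raised by `c₀ + c₁|x| + c₁²/(2ι)`, is an affine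
(hence concave) majorant of `g - Γ̃`: writing `t = x + s`, the curvature term `-ι s²/2` absorbs
the linear growth `c₁|s|` of `g` up to the constant `c₁²/(2ι)`.
-/

lemma IsConcaveEnvelope.le_affine {h e : ℝ → ℝ} (he : IsConcaveEnvelope h e) {a b : ℝ}
    (hab : ∀ t, h t ≤ a + b * t) (x : ℝ) : e x ≤ a + b * x :=
  he.2.2 (fun t => a + b * t)
    ((concaveOn_const a convex_univ).add ((LinearMap.mul ℝ ℝ b).concaveOn convex_univ)) hab x

lemma mul_sub_mul_sq_div_two_le {ι : ℝ} (hι : 0 < ι) (c s : ℝ) :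
    c * s - ι * s ^ 2 / 2 ≤ c ^ 2 / (2 * ι) := by
  rw [le_div_iff₀ (by positivity)]
  nlinarith [sq_nonneg (c - ι * s)]

lemma sub_mul_sq_div_two_le_tangent {g : ℝ → ℝ} {c₀ c₁ ι : ℝ} (hc₁ : 0 ≤ c₁) (hι : 0 < ι)
    (hg : ∀ t, g t ≤ c₀ + c₁ * |t|) (x t : ℝ) :
    g t - ι * t ^ 2 / 2 ≤
      (c₀ + c₁ * |x| + c₁ ^ 2 / (2 * ι) + ι * x ^ 2 / 2) + -(ι * x) * t := by
  have hgt : g t ≤ c₀ + c₁ * |x| + c₁ * |t - x| := by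
    have := mul_le_mul_of_nonneg_left (abs_sub_abs_le_abs_sub t x) hc₁
    linarith [hg t]
  have hs := mul_sub_mul_sq_div_two_le hι c₁ |t - x|
  rw [sq_abs] at hs
  linarith

theorem stmt_1 (g : ℝ → ℝ) (c₀ c₁ ι : ℝ) (hc₀ : 0 ≤ c₀) (hc₁ : 0 ≤ c₁) (hι : 0 < ι)
    (hg : ∀ x, |g x| ≤ c₀ + c₁ * |x|)
    (e : ℝ → ℝ)
    (he : IsConcaveEnvelope (fun x => g x - ι * x ^ 2 / 2) e) :
    ∃ C₀ C₁ : ℝ, 0 ≤ C₀ ∧ 0 ≤ C₁ ∧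
      ∀ x, |e x + ι * x ^ 2 / 2| ≤ C₀ + C₁ * |x| := by
  refine ⟨c₀ + c₁ ^ 2 / (2 * ι), c₁, by positivity, hc₁, fun x => abs_le.mpr ⟨?_, ?_⟩⟩
  · have hlower : g x - ι * x ^ 2 / 2 ≤ e x := he.2.1 x
    have hc : 0 ≤ c₁ ^ 2 / (2 * ι) := by positivity
    linarith [(abs_le.mp (hg x)).1]
  · have hupper := he.le_affine
      (sub_mul_sq_div_two_le_tangent hc₁ hι (fun t => (abs_le.mp (hg t)).2) x) x
    linarith
end

section
/- Let σ, f be bounded measurable with inf σ > 0, inf f > 0, and let k ≥ 0, γ̄ bounded with ι ≤ γ̄ ≤ 1/f − ι for ι > 0. Define γ_Y^a(x) := a/(σ(x) + f(x)a). If a ∈ ℝ and x ∈ ℝ satisfy −k ≤ γ_Y^a(x) ≤ γ̄(x), then necessarily σ(x) + f(x)a > 0, and there exists ε > 0 (depending only on the bounds on σ, f, γ̄, ι, k) such that ε/(1 + kε⁻¹) ≤ σ(x) + f(x)a ≤ ε⁻¹ + ε⁻² and |a| ≤ ε⁻¹. -/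
/-!
Writing `D = σ + f a` and `g = a / D`, the identity `g D = a` rearranges to `D (1 - f g) = σ`.
The constraint `-k ≤ g ≤ 1/f - ι` pins `1 - f g` between `ι f > 0` and `1 + k f`, so
`D = σ / (1 - f g)` is positive and lies between `σ / (1 + k f)` and `σ / (ι f)`; then
`|a| = |D - σ| / f ≤ (D + σ) / f`. The bounds on `σ` and `f` make all of this uniform in `x`.
-/

section Pointwise

variable {s F a g ι k : ℝ}

lemma add_mul_mul_one_sub_mul_eq (h : g * (s + F * a) = a) : (s + F * a) * (1 - F * g) = s := by
  linear_combination (-F) * h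

lemma mul_le_one_sub_mul (hF : 0 < F) (hg : g ≤ 1 / F - ι) : ι * F ≤ 1 - F * g :=
  calc ι * F = 1 - F * (1 / F - ι) := by field_simp; ring
    _ ≤ 1 - F * g := by gcongr

lemma one_sub_mul_le (hF : 0 ≤ F) (hgk : -k ≤ g) : 1 - F * g ≤ 1 + k * F := by
  nlinarith

lemma div_le_add_mul_and_le_div (hs : 0 < s) (hF : 0 < F) (hι : 0 < ι)
    (hgk : -k ≤ g) (hg : g ≤ 1 / F - ι) (h : g * (s + F * a) = a) :
    s / (1 + k * F) ≤ s + F * a ∧ s + F * a ≤ s / (ι * F) := by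
  have hlow := mul_le_one_sub_mul hF hg
  have hιF : 0 < ι * F := by positivity
  have hD : s + F * a = s / (1 - F * g) := by
    rw [eq_div_iff (by linarith)]
    exact add_mul_mul_one_sub_mul_eq h
  rw [hD]
  exact ⟨div_le_div_of_nonneg_left hs.le (by linarith) (one_sub_mul_le hF.le hgk),
    div_le_div_of_nonneg_left hs.le hιF hlow⟩

lemma abs_le_add_div (hF : 0 < F) (hs : 0 ≤ s) (hD : 0 ≤ s + F * a) :
    |a| ≤ (s + F * a + s) / F :=
  calc |a| = |F * a| / F := by rw [abs_mul, abs_of_pos hF, mul_div_cancel_left₀ _ hF.ne']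
    _ ≤ (s + F * a + s) / F := by gcongr; exact abs_le.mpr ⟨by linarith, by linarith⟩

end Pointwise

lemma bounds_of_mul_eq {s F a g ι k mσ mf Cσ Cf : ℝ} (hmσ : 0 < mσ) (hmf : 0 < mf)
    (hι : 0 < ι) (hk : 0 ≤ k) (hs : mσ ≤ s) (hs' : s ≤ Cσ) (hF : mf ≤ F) (hF' : F ≤ Cf)
    (hgk : -k ≤ g) (hg : g ≤ 1 / F - ι) (h : g * (s + F * a) = a) :
    mσ / (1 + k * Cf) ≤ s + F * a ∧ s + F * a ≤ Cσ / (ι * mf) ∧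
      |a| ≤ (Cσ / (ι * mf) + Cσ) / mf := by
  have hs0 : 0 < s := hmσ.trans_le hs
  have hF0 : 0 < F := hmf.trans_le hF
  have hCσ : 0 < Cσ := hs0.trans_le hs'
  have hCf : 0 < Cf := hF0.trans_le hF'
  obtain ⟨hlow, hup⟩ := div_le_add_mul_and_le_div hs0 hF0 hι hgk hg h
  have hlow' : mσ / (1 + k * Cf) ≤ s + F * a :=
    le_trans (div_le_div₀ hs0.le hs (by positivity) (by gcongr)) hlow
  have hup' : s + F * a ≤ Cσ / (ι * mf) :=
    hup.trans (div_le_div₀ hCσ.le hs' (by positivity) (by gcongr))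
  have hD : 0 ≤ s + F * a := (div_nonneg hmσ.le (by positivity)).trans hlow'
  refine ⟨hlow', hup', (abs_le_add_div hF0 hs0.le hD).trans ?_⟩
  exact div_le_div₀ (by positivity) (by linarith) hmf hF

lemma exists_pos_le_and_le_inv {L : ℝ} (hL : 0 < L) (U : ℝ) : ∃ ε > 0, ε ≤ L ∧ U ≤ ε⁻¹ := by
  refine ⟨min L (|U| + 1)⁻¹, by positivity, min_le_left _ _, ?_⟩
  calc U ≤ |U| + 1 := by linarith [le_abs_self U]
    _ = ((|U| + 1)⁻¹)⁻¹ := (inv_inv _).symm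
    _ ≤ (min L (|U| + 1)⁻¹)⁻¹ := inv_anti₀ (by positivity) (min_le_right _ _)

theorem stmt_13_general (σ f γ : ℝ → ℝ) (ι k : ℝ) (hι : 0 < ι) (hk : 0 ≤ k)
    (Cσ Cf : ℝ) (hσb : ∀ x, |σ x| ≤ Cσ) (hfb : ∀ x, |f x| ≤ Cf)
    (mσ mf : ℝ) (hmσ : 0 < mσ) (hσi : ∀ x, mσ ≤ σ x)
    (hmf : 0 < mf) (hfi : ∀ x, mf ≤ f x)
    (hγ : ∀ x, ι ≤ γ x ∧ γ x ≤ 1 / f x - ι) :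
    (∀ a x : ℝ, σ x + f x * a ≠ 0 →
        -k ≤ a / (σ x + f x * a) → a / (σ x + f x * a) ≤ γ x →
        0 < σ x + f x * a) ∧
    ∃ ε > (0 : ℝ), ∀ a x : ℝ, σ x + f x * a ≠ 0 →
        -k ≤ a / (σ x + f x * a) → a / (σ x + f x * a) ≤ γ x →
        ε / (1 + k * ε⁻¹) ≤ σ x + f x * a ∧
        σ x + f x * a ≤ ε⁻¹ + ε⁻¹ ^ 2 ∧ |a| ≤ ε⁻¹ := by
  have hL : 0 < mσ / (1 + k * Cf) := by
    have := (abs_nonneg _).trans (hfb 0)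
    positivity
  have hbounds : ∀ a x : ℝ, σ x + f x * a ≠ 0 →
      -k ≤ a / (σ x + f x * a) → a / (σ x + f x * a) ≤ γ x →
      mσ / (1 + k * Cf) ≤ σ x + f x * a ∧ σ x + f x * a ≤ Cσ / (ι * mf) ∧
        |a| ≤ (Cσ / (ι * mf) + Cσ) / mf := fun a x hne hgk hg =>
    bounds_of_mul_eq hmσ hmf hι hk (hσi x) ((le_abs_self _).trans (hσb x)) (hfi x)
      ((le_abs_self _).trans (hfb x)) hgk (hg.trans (hγ x).2) (div_mul_cancel₀ a hne)
  refine ⟨fun a x hne hgk hg => hL.trans_le (hbounds a x hne hgk hg).1, ?_⟩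
  obtain ⟨ε, hε, hεL, hεU⟩ :=
    exists_pos_le_and_le_inv hL (max (Cσ / (ι * mf)) ((Cσ / (ι * mf) + Cσ) / mf))
  rw [max_le_iff] at hεU
  refine ⟨ε, hε, fun a x hne hgk hg => ?_⟩
  obtain ⟨hlow, hup, ha⟩ := hbounds a x hne hgk hg
  have hεdiv : ε / (1 + k * ε⁻¹) ≤ ε := div_le_self hε.le (le_add_of_nonneg_right (by positivity))
  exact ⟨hεdiv.trans (hεL.trans hlow), by linarith [hεU.1, sq_nonneg ε⁻¹], ha.trans hεU.2⟩

theorem stmt_13 (σ f γ : ℝ → ℝ) (ι k : ℝ) (hι : 0 < ι) (hk : 0 ≤ k)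
    (hσm : Measurable σ) (hfm : Measurable f)
    (Cσ Cf : ℝ) (hσb : ∀ x, |σ x| ≤ Cσ) (hfb : ∀ x, |f x| ≤ Cf)
    (mσ mf : ℝ) (hmσ : 0 < mσ) (hσi : ∀ x, mσ ≤ σ x)
    (hmf : 0 < mf) (hfi : ∀ x, mf ≤ f x)
    (Cγ : ℝ) (hγb : ∀ x, |γ x| ≤ Cγ)
    (hγ : ∀ x, ι ≤ γ x ∧ γ x ≤ 1 / f x - ι) :
    (∀ a x : ℝ, σ x + f x * a ≠ 0 →
        -k ≤ a / (σ x + f x * a) → a / (σ x + f x * a) ≤ γ x →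
        0 < σ x + f x * a) ∧
    ∃ ε > (0 : ℝ), ∀ a x : ℝ, σ x + f x * a ≠ 0 →
        -k ≤ a / (σ x + f x * a) → a / (σ x + f x * a) ≤ γ x →
        ε / (1 + k * ε⁻¹) ≤ σ x + f x * a ∧
        σ x + f x * a ≤ ε⁻¹ + ε⁻¹ ^ 2 ∧ |a| ≤ ε⁻¹ :=
  stmt_13_general σ f γ ι k hι hk Cσ Cf hσb hfb mσ mf hmσ hσi hmf hfi hγ
end

section
/- (Face-lift for the call spread) Let g(x) = (x − K₁)⁺ − (x − K₂)⁺ with K₁ < K₂, γ̄ > 0 constant, and assume K₁ + 1/(2γ̄) ≤ K₂. Set x⁻ = K₁ − 1/(2γ̄), x⁺ = K₁ + 1/(2γ̄). Then the function ĝ defined by ĝ(x) = 0 for x < x⁻, ĝ(x) = (γ̄/2)(x − x⁻)² for x⁻ ≤ x < x⁺, ĝ(x) = x − K₁ for x⁺ ≤ x < K₂, and ĝ(x) = K₂ − K₁ for x ≥ K₂, is the smallest function u ≥ g such that u(x) − γ̄x²/2 is concave. -/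
/-!
Put `a, b = K₁ ∓ 1/(2γ)` and `Γ(x) = γx²/2`. The face-lift of the single call `(x - K₁)⁺` is
`γ/2 · ((x - a)² - d(x, [a, b])²)`: minus `Γ` it is an affine function minus `γ/2 · d(x, [a, b])²`,
hence concave, and `ĝ` is this face-lift capped at `K₂ - K₁`. Off `(a, b)` we have `ĝ = g`; on
`[a, b]`, `ĝ - Γ` is the line through `(a, g a - Γ a)` and `(b, g b - Γ b)`, which lies below any
concave `u - Γ` with `u ≥ g`.
-/

open Set

theorem ConcaveOn.ge_convexOn_on_segment {𝕜 E β : Type*} [Field 𝕜] [LinearOrder 𝕜]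
    [IsStrictOrderedRing 𝕜] [AddCommGroup E] [Module 𝕜 E] [AddCommGroup β] [LinearOrder β]
    [IsOrderedAddMonoid β] [Module 𝕜 β] [PosSMulStrictMono 𝕜 β] {s : Set E} {f g : E → β}
    (hf : ConcaveOn 𝕜 s f) (hg : ConvexOn 𝕜 s g) {x y z : E} (hx : x ∈ s) (hy : y ∈ s)
    (hgfx : g x ≤ f x) (hgfy : g y ≤ f y) (hz : z ∈ segment 𝕜 x y) : g z ≤ f z :=
  sub_nonneg.1 <| (le_min (sub_nonneg.2 hgfx) (sub_nonneg.2 hgfy)).trans <|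
    (hf.sub hg).ge_on_segment hx hy hz

theorem ConvexOn.sq_max_zero {E : Type*} [AddCommGroup E] [Module ℝ E] {s : Set E}
    {f : E → ℝ} (hf : ConvexOn ℝ s f) : ConvexOn ℝ s fun x => max (f x) 0 ^ 2 :=
  (hf.sup (convexOn_const 0 hf.1)).pow (fun _ _ => le_max_right _ _) 2

theorem convexOn_mul_sq_div_two {γ : ℝ} (hγ : 0 ≤ γ) :
    ConvexOn ℝ univ fun x : ℝ => γ * x ^ 2 / 2 :=
  (even_two.convexOn_pow.smul (by positivity : 0 ≤ γ / 2)).congr fun x _ => by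
    simp only [smul_eq_mul]
    ring

theorem convexOn_affine (m c : ℝ) : ConvexOn ℝ univ fun x => m * x + c :=
  ((LinearMap.mulLeft ℝ m).convexOn convex_univ).add_const c

theorem concaveOn_affine (m c : ℝ) : ConcaveOn ℝ univ fun x => m * x + c :=
  ((LinearMap.mulLeft ℝ m).concaveOn convex_univ).add_const c

theorem concaveOn_min_const_sub_sq {γ : ℝ} (hγ : 0 ≤ γ) {f : ℝ → ℝ}
    (hf : ConcaveOn ℝ univ fun x => f x - γ * x ^ 2 / 2) (c : ℝ) :
    ConcaveOn ℝ univ fun x => min (f x) c - γ * x ^ 2 / 2 := by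
  have hc : ConcaveOn ℝ univ fun x => c - γ * x ^ 2 / 2 :=
    (concaveOn_const c convex_univ).sub (convexOn_mul_sq_div_two hγ)
  have hmin : (fun x => min (f x) c - γ * x ^ 2 / 2) =
      (fun x => f x - γ * x ^ 2 / 2) ⊓ fun x => c - γ * x ^ 2 / 2 :=
    funext fun x => (min_sub_sub_right _ _ _).symm
  rw [hmin]
  exact hf.inf hc

theorem mul_one_div_two_mul {γ : ℝ} (hγ : γ ≠ 0) : γ * (1 / (2 * γ)) = 1 / 2 := by
  field_simp

def callSpread (K₁ K₂ x : ℝ) : ℝ := max (x - K₁) 0 - max (x - K₂) 0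

/-- `γ/2 · ((x - a)² - d(x, [a, b])²)` with `a, b = K ∓ 1/(2γ)`. -/
noncomputable def callFaceLift (K γ x : ℝ) : ℝ :=
  γ / 2 * ((x - (K - 1 / (2 * γ))) ^ 2 - max (K - 1 / (2 * γ) - x) 0 ^ 2
    - max (x - (K + 1 / (2 * γ))) 0 ^ 2)

noncomputable def faceLift (K₁ K₂ γ x : ℝ) : ℝ :=
  if x < K₁ - 1 / (2 * γ) then 0
  else if x < K₁ + 1 / (2 * γ) then γ / 2 * (x - (K₁ - 1 / (2 * γ))) ^ 2
  else if x < K₂ then x - K₁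
  else K₂ - K₁

section

variable {K K₁ K₂ γ x : ℝ}

theorem callSpread_eq_min (h : K₁ ≤ K₂) (x : ℝ) :
    callSpread K₁ K₂ x = min (max (x - K₁) 0) (K₂ - K₁) := by
  simp only [callSpread, max_def, min_def]
  split_ifs <;> linarith

theorem callFaceLift_of_le (hγ : 0 < γ) (hx : x ≤ K - 1 / (2 * γ)) : callFaceLift K γ x = 0 := by
  have : 0 < 1 / (2 * γ) := by positivity
  rw [callFaceLift, max_eq_left (by linarith), max_eq_right (by linarith)]
  ring

theorem callFaceLift_of_mem_Icc (hx : x ∈ Icc (K - 1 / (2 * γ)) (K + 1 / (2 * γ))) :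
    callFaceLift K γ x = γ / 2 * (x - (K - 1 / (2 * γ))) ^ 2 := by
  rw [callFaceLift, max_eq_right (by linarith [hx.1]), max_eq_right (by linarith [hx.2])]
  ring

theorem callFaceLift_of_ge (hγ : 0 < γ) (hx : K + 1 / (2 * γ) ≤ x) :
    callFaceLift K γ x = x - K := by
  have : 0 < 1 / (2 * γ) := by positivity
  rw [callFaceLift, max_eq_right (by linarith), max_eq_left (by linarith)]
  linear_combination (2 * (x - K)) * mul_one_div_two_mul hγ.ne'

theorem posPart_le_callFaceLift (hγ : 0 < γ) (x : ℝ) : max (x - K) 0 ≤ callFaceLift K γ x := by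
  have hε : 0 < 1 / (2 * γ) := by positivity
  rcases le_or_gt x (K - 1 / (2 * γ)) with hxa | hxa
  · rw [callFaceLift_of_le hγ hxa]
    exact max_le (by linarith) le_rfl
  rcases le_or_gt x (K + 1 / (2 * γ)) with hxb | hxb
  · rw [callFaceLift_of_mem_Icc ⟨hxa.le, hxb⟩]
    have hsquare : γ / 2 * (x - (K - 1 / (2 * γ))) ^ 2
        = (x - K) + γ / 2 * (x - (K + 1 / (2 * γ))) ^ 2 := by
      linear_combination (2 * (x - K)) * mul_one_div_two_mul hγ.ne'
    have : 0 ≤ γ / 2 * (x - (K + 1 / (2 * γ))) ^ 2 := by positivity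
    exact max_le (by linarith) (by positivity)
  · rw [callFaceLift_of_ge hγ hxb.le]
    exact max_le le_rfl (by linarith)

theorem callFaceLift_eq_posPart (hγ : 0 < γ) (hx : x ∉ Ioo (K - 1 / (2 * γ)) (K + 1 / (2 * γ))) :
    callFaceLift K γ x = max (x - K) 0 := by
  have hε : 0 < 1 / (2 * γ) := by positivity
  rcases le_or_gt x (K - 1 / (2 * γ)) with hxa | hxa
  · rw [callFaceLift_of_le hγ hxa, max_eq_right (by linarith)]
  · have hxb : K + 1 / (2 * γ) ≤ x := not_lt.1 fun hxb => hx ⟨hxa, hxb⟩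
    rw [callFaceLift_of_ge hγ hxb, max_eq_left (by linarith)]

theorem concaveOn_callFaceLift_sub_sq (hγ : 0 ≤ γ) (K : ℝ) :
    ConcaveOn ℝ univ fun x => callFaceLift K γ x - γ * x ^ 2 / 2 := by
  set a := K - 1 / (2 * γ)
  set b := K + 1 / (2 * γ)
  have hdist : ConvexOn ℝ univ fun x => max (a - x) 0 ^ 2 + max (x - b) 0 ^ 2 := by
    have hl : ConvexOn ℝ univ fun x => a - x :=
      (convexOn_affine (-1) a).congr fun x _ => by ring
    have hr : ConvexOn ℝ univ fun x => x - b :=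
      (convexOn_affine 1 (-b)).congr fun x _ => by ring
    exact hl.sq_max_zero.add hr.sq_max_zero
  refine ((concaveOn_affine (-(γ * a)) (γ * a ^ 2 / 2)).sub
    (hdist.smul (by positivity : 0 ≤ γ / 2))).congr fun x _ => ?_
  simp only [Pi.sub_apply, smul_eq_mul, callFaceLift]
  ring

theorem faceLift_eq_min (hγ : 0 < γ) (hgap : K₁ + 1 / (2 * γ) ≤ K₂) (x : ℝ) :
    faceLift K₁ K₂ γ x = min (callFaceLift K₁ γ x) (K₂ - K₁) := by
  have hε : 0 < 1 / (2 * γ) := by positivity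
  unfold faceLift
  split_ifs with hxa hxb hx₂
  · rw [callFaceLift_of_le hγ hxa.le, min_eq_left (by linarith)]
  · rw [not_lt] at hxa
    rw [callFaceLift_of_mem_Icc ⟨hxa, hxb.le⟩, min_eq_left]
    have hsq : (x - (K₁ - 1 / (2 * γ))) ^ 2 ≤ (2 * (1 / (2 * γ))) ^ 2 :=
      pow_le_pow_left₀ (by linarith) (by linarith) 2
    calc γ / 2 * (x - (K₁ - 1 / (2 * γ))) ^ 2
        ≤ γ / 2 * (2 * (1 / (2 * γ))) ^ 2 := by gcongr
      _ = 1 / (2 * γ) := by linear_combination (2 * (1 / (2 * γ))) * mul_one_div_two_mul hγ.ne'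
      _ ≤ K₂ - K₁ := by linarith
  · rw [callFaceLift_of_ge hγ (not_lt.1 hxb), min_eq_left (by linarith)]
  · rw [callFaceLift_of_ge hγ (not_lt.1 hxb), min_eq_right (by linarith)]

theorem callSpread_le_faceLift (hγ : 0 < γ) (hgap : K₁ + 1 / (2 * γ) ≤ K₂) (x : ℝ) :
    callSpread K₁ K₂ x ≤ faceLift K₁ K₂ γ x := by
  have hK : K₁ ≤ K₂ := by linarith [show 0 < 1 / (2 * γ) by positivity]
  rw [callSpread_eq_min hK, faceLift_eq_min hγ hgap]
  exact min_le_min_right _ (posPart_le_callFaceLift hγ x)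

theorem concaveOn_faceLift_sub_sq (hγ : 0 < γ) (hgap : K₁ + 1 / (2 * γ) ≤ K₂) :
    ConcaveOn ℝ univ fun x => faceLift K₁ K₂ γ x - γ * x ^ 2 / 2 := by
  simp_rw [faceLift_eq_min hγ hgap]
  exact concaveOn_min_const_sub_sq hγ.le (concaveOn_callFaceLift_sub_sq hγ.le K₁) _

theorem faceLift_le_of_concaveOn (hγ : 0 < γ) (hgap : K₁ + 1 / (2 * γ) ≤ K₂) {u : ℝ → ℝ}
    (hu : ∀ x, callSpread K₁ K₂ x ≤ u x)
    (hconc : ConcaveOn ℝ univ fun x => u x - γ * x ^ 2 / 2) (x : ℝ) :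
    faceLift K₁ K₂ γ x ≤ u x := by
  have hγε := mul_one_div_two_mul hγ.ne'
  have hε : 0 < 1 / (2 * γ) := by positivity
  have hK : K₁ ≤ K₂ := by linarith
  by_cases hx : x ∉ Ioo (K₁ - 1 / (2 * γ)) (K₁ + 1 / (2 * γ))
  · rw [faceLift_eq_min hγ hgap, callFaceLift_eq_posPart hγ hx, ← callSpread_eq_min hK]
    exact hu x
  rw [not_not] at hx
  have hua := hu (K₁ - 1 / (2 * γ))
  rw [callSpread_eq_min hK, max_eq_right (by linarith), min_eq_left (by linarith)] at hua
  have hub := hu (K₁ + 1 / (2 * γ))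
  rw [callSpread_eq_min hK, add_sub_cancel_left, max_eq_left hε.le,
    min_eq_left (by linarith)] at hub
  set ε := 1 / (2 * γ)
  set a := K₁ - ε
  set b := K₁ + ε
  have hab : a ≤ b := by linarith
  -- the tangent to `-γx²/2` at `a`, which is also tangent to `x - K₁ - γx²/2` at `b`
  have hline := hconc.ge_convexOn_on_segment (convexOn_affine (-(γ * a)) (γ * a ^ 2 / 2))
    (mem_univ a) (mem_univ b) (by linarith) (by linear_combination hub + 2 * ε * hγε)
    ((segment_eq_Icc hab).symm ▸ Ioo_subset_Icc_self hx)
  calc faceLift K₁ K₂ γ x ≤ callFaceLift K₁ γ x := faceLift_eq_min hγ hgap x ▸ min_le_left _ _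
    _ = γ / 2 * (x - a) ^ 2 := callFaceLift_of_mem_Icc (Ioo_subset_Icc_self hx)
    _ ≤ u x := by linarith

end

theorem stmt_16_general (K₁ K₂ γ : ℝ) (hγ : 0 < γ)
    (hgap : K₁ + 1 / (2 * γ) ≤ K₂)
    (g : ℝ → ℝ) (hg : ∀ x, g x = max (x - K₁) 0 - max (x - K₂) 0)
    (ghat : ℝ → ℝ)
    (hghat : ∀ x, ghat x =
      if x < K₁ - 1 / (2 * γ) then 0
      else if x < K₁ + 1 / (2 * γ) then γ / 2 * (x - (K₁ - 1 / (2 * γ))) ^ 2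
      else if x < K₂ then x - K₁
      else K₂ - K₁) :
    (∀ x, g x ≤ ghat x) ∧
    ConcaveOn ℝ Set.univ (fun x => ghat x - γ * x ^ 2 / 2) ∧
    ∀ u : ℝ → ℝ, (∀ x, g x ≤ u x) →
      ConcaveOn ℝ Set.univ (fun x => u x - γ * x ^ 2 / 2) →
      ∀ x, ghat x ≤ u x := by
  obtain rfl : g = callSpread K₁ K₂ := funext hg
  obtain rfl : ghat = faceLift K₁ K₂ γ := funext hghat
  exact ⟨callSpread_le_faceLift hγ hgap, concaveOn_faceLift_sub_sq hγ hgap,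
    fun _ hu hconc => faceLift_le_of_concaveOn hγ hgap hu hconc⟩

theorem stmt_16 (K₁ K₂ γ : ℝ) (hK : K₁ < K₂) (hγ : 0 < γ)
    (hgap : K₁ + 1 / (2 * γ) ≤ K₂)
    (g : ℝ → ℝ) (hg : ∀ x, g x = max (x - K₁) 0 - max (x - K₂) 0)
    (ghat : ℝ → ℝ)
    (hghat : ∀ x, ghat x =
      if x < K₁ - 1 / (2 * γ) then 0
      else if x < K₁ + 1 / (2 * γ) then γ / 2 * (x - (K₁ - 1 / (2 * γ))) ^ 2
      else if x < K₂ then x - K₁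
      else K₂ - K₁) :
    (∀ x, g x ≤ ghat x) ∧
    ConcaveOn ℝ Set.univ (fun x => ghat x - γ * x ^ 2 / 2) ∧
    ∀ u : ℝ → ℝ, (∀ x, g x ≤ u x) →
      ConcaveOn ℝ Set.univ (fun x => u x - γ * x ^ 2 / 2) →
      ∀ x, ghat x ≤ u x :=
  stmt_16_general K₁ K₂ γ hγ hgap g hg ghat hghat
end

section
/- Let w, h : ℝ → ℝ with |h| ≤ w, w continuous of linear growth, and suppose Γ̄°, Γ̃ ∈ C² satisfy (Γ̄°)'' = γ̄ ≥ Γ̃'' = η pointwise with 0 < η. Then ((w − Γ̄°)^conc + Γ̄° − Γ̃)^conc + Γ̃ ≤ ((w − Γ̃)^conc + Γ̃ − Γ̃)^conc + Γ̃ = (w − Γ̃)^conc + Γ̃; i.e., the face-lift with the larger curvature bound γ̄ followed by face-lift with η is dominated by the single face-lift with η: ((w − Γ̄°)^conc + Γ̄° − Γ̃)^conc + Γ̃ ≤ (w − Γ̃)^conc + Γ̃. -/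
/-!
Since `γ ≥ η`, the function `Γ - Γt` is convex. Hence `(w - Γt)^conc - (Γ - Γt)` is a concave
majorant of `w - Γ`, so `(w - Γ)^conc + Γ - Γt ≤ (w - Γt)^conc`; the right-hand side is concave,
so it also dominates the concave envelope of the left-hand side.
-/

open Set

theorem convexOn_univ_sub_of_deriv2_le {f g : ℝ → ℝ} (hf : ContDiff ℝ 2 f) (hg : ContDiff ℝ 2 g)
    (hfg : ∀ x, deriv (deriv g) x ≤ deriv (deriv f) x) : ConvexOn ℝ univ (f - g) := by
  have hf₁ : Differentiable ℝ f := hf.differentiable (by norm_num)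
  have hg₁ : Differentiable ℝ g := hg.differentiable (by norm_num)
  have hf₂ : Differentiable ℝ (deriv f) := (hf.iterate_deriv' 1 1).differentiable (by norm_num)
  have hg₂ : Differentiable ℝ (deriv g) := (hg.iterate_deriv' 1 1).differentiable (by norm_num)
  have hderiv : deriv (f - g) = deriv f - deriv g := funext fun x => deriv_sub (hf₁ x) (hg₁ x)
  refine convexOn_univ_of_deriv2_nonneg (hf₁.sub hg₁) (hderiv ▸ hf₂.sub hg₂) fun x => ?_
  rw [Function.iterate_succ_apply, Function.iterate_one, hderiv, deriv_sub (hf₂ x) (hg₂ x),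
    sub_nonneg]
  exact hfg x

namespace IsConcaveEnvelope

variable {h h' e e' : ℝ → ℝ}

theorem le_of_concaveOn (he : IsConcaveEnvelope h e) {u : ℝ → ℝ} (hu : ConcaveOn ℝ univ u)
    (hhu : ∀ x, h x ≤ u x) (x : ℝ) : e x ≤ u x :=
  he.2.2 u hu hhu x

theorem add_le_of_convexOn (he : IsConcaveEnvelope h e) (he' : IsConcaveEnvelope h' e')
    {c : ℝ → ℝ} (hc : ConvexOn ℝ univ c) (hle : ∀ x, h x + c x ≤ h' x) (x : ℝ) :
    e x + c x ≤ e' x := by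
  have hmaj : ∀ y, h y ≤ (e' - c) y := fun y => by
    simp only [Pi.sub_apply]
    linarith [hle y, he'.2.1 y]
  have := he.le_of_concaveOn (he'.1.sub hc) hmaj x
  simp only [Pi.sub_apply] at this
  linarith

end IsConcaveEnvelope

theorem stmt_19_general (w γ : ℝ → ℝ)
    (η : ℝ)
    (Γ Γt : ℝ → ℝ)
    (hΓ : ContDiff ℝ 2 Γ) (hΓ'' : ∀ x, deriv (deriv Γ) x = γ x)
    (hΓt : ContDiff ℝ 2 Γt) (hΓt'' : ∀ x, deriv (deriv Γt) x = η)
    (hγη : ∀ x, η ≤ γ x)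
    (e₁ e₂ e₃ : ℝ → ℝ)
    (he₁ : IsConcaveEnvelope (fun x => w x - Γ x) e₁)
    (he₂ : IsConcaveEnvelope (fun x => e₁ x + Γ x - Γt x) e₂)
    (he₃ : IsConcaveEnvelope (fun x => w x - Γt x) e₃) :
    ∀ x, e₂ x + Γt x ≤ e₃ x + Γt x := by
  have hconv : ConvexOn ℝ univ (Γ - Γt) :=
    convexOn_univ_sub_of_deriv2_le hΓ hΓt fun x => by rw [hΓ'', hΓt'']; exact hγη x
  have h₁₃ : ∀ x, e₁ x + Γ x - Γt x ≤ e₃ x := fun x => by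
    have := he₁.add_le_of_convexOn he₃ hconv (fun y => by simp only [Pi.sub_apply]; linarith) x
    simp only [Pi.sub_apply] at this
    linarith
  intro x
  simpa using he₂.le_of_concaveOn he₃.1 h₁₃ x

theorem stmt_19 (w h γ : ℝ → ℝ) (hhw : ∀ x, |h x| ≤ w x)
    (hwc : Continuous w) (c₀ c₁ : ℝ) (hw : ∀ x, |w x| ≤ c₀ + c₁ * |x|)
    (η : ℝ) (hη : 0 < η)
    (Γ Γt : ℝ → ℝ)
    (hΓ : ContDiff ℝ 2 Γ) (hΓ'' : ∀ x, deriv (deriv Γ) x = γ x)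
    (hΓt : ContDiff ℝ 2 Γt) (hΓt'' : ∀ x, deriv (deriv Γt) x = η)
    (hγη : ∀ x, η ≤ γ x)
    (e₁ e₂ e₃ : ℝ → ℝ)
    (he₁ : IsConcaveEnvelope (fun x => w x - Γ x) e₁)
    (he₂ : IsConcaveEnvelope (fun x => e₁ x + Γ x - Γt x) e₂)
    (he₃ : IsConcaveEnvelope (fun x => w x - Γt x) e₃) :
    ∀ x, e₂ x + Γt x ≤ e₃ x + Γt x :=
  stmt_19_general w γ η Γ Γt hΓ hΓ'' hΓt hΓt'' hγη e₁ e₂ e₃ he₁ he₂ he₃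
end
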